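/- arXiv:1804.00017 — 4 statements merged into one kernel-verified Lean document; each statement's English description precedes it below -/
import Mathlib

section
/- Let V be a vector space over a field k of characteristic zero with integer-indexed bilinear products satisfying the truncation axiom and the Borcherds identity. Then for all a, b, c ∈ V and every formal Laurent series f ∈ k((x)): (a_{(f)}b)_{(0)}c = ∑_{j≥0} ( (−1)^j · a_{(∂^{(j)}f)}(b_{(j)}c) − b_{((∂^{(j)}f)(−x))}(a_{(j)}c) ), where all sums involved have only finitely many nonzero terms. -/
open scoped BigOperators

/-- The generalized binomial coefficient `C(m, j) = m(m-1)⋯(m-j+1)/j!` of an integer `m`,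
viewed as an element of a field `k` of characteristic zero. -/
noncomputable def zBinom (k : Type*) [Field k] (m : ℤ) (j : ℕ) : k :=
  (∏ i ∈ Finset.range j, ((m : k) - (i : k))) / (Nat.factorial j : k)

/-- The `f`-product `a_{(f)} b = ∑_n f_n · a_{(n)} b` associated with a family of
integer-indexed products `prod` and a coefficient function `f : ℤ → k`
(thought of as the Laurent series `f = ∑_n f_n x^n`). -/
noncomputable def fProduct {k V : Type*} [Field k] [AddCommGroup V] [Module k V]
    (prod : ℤ → V → V → V) (f : ℤ → k) (a b : V) : V :=
  ∑ᶠ n : ℤ, f n • prod n a b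

/-!
Taking `m = k₀ = 0` in the Borcherds identity kills every term of its left side except
`(a_{(n)}b)_{(0)}c`, since `C(0, j) = 0` for `j > 0`; this is the theorem for the monomial
`f = xⁿ`. Multiplying by `f_n` and summing over `n` gives the general case: the sum over `n`
is finite because `f` vanishes at `-∞` and `a_{(n)}b` at `+∞`, the sum over `j` is cut off
uniformly in `n` by the truncation of `b_{(j)}c` and `a_{(j)}c`, and after the substitution
`n = m + j` the `j`-th column sums to the two `f`-products on the right.
-/

open Filter Function Finset

lemma Int.hasFiniteSupport_of_eventually_eq_zero {M : Type*} [Zero M] {g : ℤ → M}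
    (hbot : ∀ᶠ n in atBot, g n = 0) (htop : ∀ᶠ n in atTop, g n = 0) : g.HasFiniteSupport :=
  eventually_cofinite.1 (Int.cofinite_eq ▸ eventually_sup.2 ⟨hbot, htop⟩)

lemma finsum_eq_sum_range_of_forall_ge {M : Type*} [AddCommMonoid M] {F : ℕ → M}
    {J : ℕ} (h : ∀ j ≥ J, F j = 0) : ∑ᶠ j, F j = ∑ j ∈ range J, F j :=
  finsum_eq_finsetSum_of_support_subset F fun j hj => by
    simpa using not_le.1 fun hJ => hj (h j hJ)

section

variable {k V : Type*} [Field k] [AddCommGroup V] [Module k V]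

lemma zBinom_zero_left {j : ℕ} (hj : j ≠ 0) : zBinom k 0 j = 0 := by
  rw [zBinom, prod_eq_zero (mem_range.2 (Nat.pos_of_ne_zero hj)) (by simp), zero_div]

lemma finsum_zBinom_zero_smul (F : ℕ → V) : ∑ᶠ j, zBinom k 0 j • F j = F 0 := by
  rw [finsum_eq_single _ 0 fun j hj => by rw [zBinom_zero_left hj, zero_smul]]
  simp [zBinom]

/-- The coefficients of the divided derivative `∂^{(j)} f`. -/
noncomputable def dividedDeriv (f : ℤ → k) (j : ℕ) : ℤ → k :=
  fun m => zBinom k (m + j) j * f (m + j)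

/-- The coefficients of `f(-x)`. -/
def compNeg (f : ℤ → k) : ℤ → k := fun m => (-1) ^ m * f m

lemma eventually_dividedDeriv_eq_zero {f : ℤ → k} (hf : ∀ᶠ n in atBot, f n = 0) (j : ℕ) :
    ∀ᶠ m in atBot, dividedDeriv f j m = 0 :=
  (tendsto_atBot_add_const_right _ (j : ℤ) tendsto_id).eventually hf |>.mono
    fun m (hm : f (m + j) = 0) => by simp [dividedDeriv, hm]

lemma eventually_compNeg_eq_zero {f : ℤ → k} (hf : ∀ᶠ n in atBot, f n = 0) :
    ∀ᶠ m in atBot, compNeg f m = 0 :=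
  hf.mono fun m hm => by simp [compNeg, hm]

lemma hasFiniteSupport_smul {f : ℤ → k} {v : ℤ → V} (hf : ∀ᶠ n in atBot, f n = 0)
    (hv : ∀ᶠ n in atTop, v n = 0) : HasFiniteSupport fun n => f n • v n :=
  Int.hasFiniteSupport_of_eventually_eq_zero (hf.mono fun n hn => by simp [hn])
    (hv.mono fun n hn => by simp [hn])

variable (k) (prod : ℤ → V → V → V)

/-- The `j`-th term of the expansion of `(a_{(n)}b)_{(0)}c` given by the Borcherds identity. -/
noncomputable def zeroModeTerm (a b c : V) (n : ℤ) (j : ℕ) : V :=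
  ((-1 : k) ^ j * zBinom k n j) •
    (prod (n - j) a (prod j b c) - ((-1 : k) ^ n) • prod (n - j) b (prod j a c))

variable {k prod}

lemma zeroModeTerm_eq_zero {a b c : V} {j : ℕ} (hzero : ∀ n x, prod n x 0 = 0)
    (hbc : prod j b c = 0) (hac : prod j a c = 0) (n : ℤ) : zeroModeTerm k prod a b c n j = 0 := by
  simp [zeroModeTerm, hbc, hac, hzero]

lemma eventually_zeroModeTerm_eq_zero {a b c : V} {j : ℕ}
    (ha : ∀ᶠ m in atTop, prod m a (prod j b c) = 0)
    (hb : ∀ᶠ m in atTop, prod m b (prod j a c) = 0) :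
    ∀ᶠ n in atTop, zeroModeTerm k prod a b c n j = 0 :=
  (tendsto_atTop_add_const_right _ (-j : ℤ) tendsto_id).eventually (ha.and hb) |>.mono
    fun n (hn : prod (n - j) a (prod j b c) = 0 ∧ prod (n - j) b (prod j a c) = 0) => by
      simp [zeroModeTerm, hn.1, hn.2]

lemma smul_zeroModeTerm_add (f : ℤ → k) (a b c : V) (m : ℤ) (j : ℕ) :
    f (m + j) • zeroModeTerm k prod a b c (m + j) j
      = (-1 : k) ^ j • (dividedDeriv f j m • prod m a (prod j b c))
        - compNeg (dividedDeriv f j) m • prod m b (prod j a c) := by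
  have hsign : (-1 : k) ^ j * ((-1 : k) ^ (m + j)) = (-1) ^ m := by
    rw [zpow_add₀ (by norm_num), zpow_natCast, mul_left_comm, ← mul_pow, neg_one_mul, neg_neg,
      one_pow, mul_one]
  simp only [zeroModeTerm, dividedDeriv, compNeg, add_sub_cancel_right, smul_sub, smul_smul,
    ← hsign]
  congr 2 <;> ring

lemma finsum_smul_zeroModeTerm {f : ℤ → k} (hf : ∀ᶠ n in atBot, f n = 0) {a b c : V} {j : ℕ}
    (ha : ∀ᶠ m in atTop, prod m a (prod j b c) = 0)
    (hb : ∀ᶠ m in atTop, prod m b (prod j a c) = 0) :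
    ∑ᶠ n, f n • zeroModeTerm k prod a b c n j
      = (-1 : k) ^ j • fProduct prod (dividedDeriv f j) a (prod j b c)
        - fProduct prod (compNeg (dividedDeriv f j)) b (prod j a c) := by
  have hdf := eventually_dividedDeriv_eq_zero hf j
  rw [← finsum_comp_equiv (Equiv.addRight (j : ℤ))]
  simp only [Equiv.coe_addRight, smul_zeroModeTerm_add]
  rw [finsum_sub_distrib ((hasFiniteSupport_smul hdf ha).fun_comp (smul_zero _))
    (hasFiniteSupport_smul (eventually_compNeg_eq_zero hdf) hb),
    fProduct, fProduct, smul_finsum' _ (hasFiniteSupport_smul hdf ha)]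

end

theorem fproduct_zero_mode_borcherds_general {k V : Type*} [Field k]
    [AddCommGroup V] [Module k V]
    (prod : ℤ → V → V → V)
    (hadd_left : ∀ (n : ℤ) (a a' b : V), prod n (a + a') b = prod n a b + prod n a' b)
    (hsmul_left : ∀ (n : ℤ) (c : k) (a b : V), prod n (c • a) b = c • prod n a b)
    (hsmul_right : ∀ (n : ℤ) (c : k) (a b : V), prod n a (c • b) = c • prod n a b)
    (htrunc : ∀ a b : V, ∃ N : ℤ, ∀ n ≥ N, prod n a b = 0)
    (hborcherds : ∀ (a b c : V) (m n k₀ : ℤ),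
      (∑ᶠ j : ℕ, zBinom k m j • prod (m + k₀ - (j : ℤ)) (prod (n + (j : ℤ)) a b) c)
        = ∑ᶠ j : ℕ, ((-1 : k) ^ j * zBinom k n j) •
            (prod (m + n - (j : ℤ)) a (prod (k₀ + (j : ℤ)) b c)
              - ((-1 : k) ^ n) • prod (n + k₀ - (j : ℤ)) b (prod (m + (j : ℤ)) a c)))
    (f : ℤ → k) (hf : ∃ N : ℤ, ∀ n < N, f n = 0) (a b c : V) :
    prod 0 (fProduct prod f a b) c
      = ∑ᶠ j : ℕ,
          (((-1 : k) ^ j) •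
              fProduct prod (fun m => zBinom k (m + (j : ℤ)) j * f (m + (j : ℤ)))
                a (prod (j : ℤ) b c)
            - fProduct prod
                (fun m => (-1 : k) ^ m * (zBinom k (m + (j : ℤ)) j * f (m + (j : ℤ))))
                b (prod (j : ℤ) a c)) := by
  replace hf : ∀ᶠ n in atBot, f n = 0 := by
    obtain ⟨N, hN⟩ := hf
    exact eventually_atBot.2 ⟨N - 1, fun n hn => hN n (by omega)⟩
  replace htrunc (a b : V) : ∀ᶠ n in atTop, prod n a b = 0 := eventually_atTop.2 (htrunc a b)
  have hzero (n : ℤ) (x : V) : prod n x 0 = 0 := by simpa using hsmul_right n 0 x 0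
  obtain ⟨J, hJ⟩ := eventually_atTop.1 <|
    tendsto_natCast_atTop_atTop.eventually ((htrunc b c).and (htrunc a c))
  have hcol (n : ℤ) : prod 0 (prod n a b) c = ∑ j ∈ range J, zeroModeTerm k prod a b c n j := by
    rw [← finsum_eq_sum_range_of_forall_ge fun j hj =>
      zeroModeTerm_eq_zero hzero (hJ j hj).1 (hJ j hj).2 n]
    simpa [finsum_zBinom_zero_smul, zeroModeTerm] using hborcherds a b c 0 n 0
  let L : V →ₗ[k] V := ⟨⟨(prod 0 · c), (hadd_left 0 · · c)⟩, (hsmul_left 0 · · c)⟩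
  calc prod 0 (fProduct prod f a b) c = ∑ᶠ n, f n • L (prod n a b) :=
        (map_finsum L (hasFiniteSupport_smul hf (htrunc a b))).trans
          (finsum_congr fun n => map_smul L _ _)
    _ = ∑ j ∈ range J, ∑ᶠ n, f n • zeroModeTerm k prod a b c n j := by
        rw [← finsum_sum_comm _ _ fun j _ => hasFiniteSupport_smul hf
          (eventually_zeroModeTerm_eq_zero (htrunc _ _) (htrunc _ _))]
        simp only [L, LinearMap.coe_mk, AddHom.coe_mk, hcol, smul_sum]
    _ = ∑ j ∈ range J, ((-1 : k) ^ j • fProduct prod (dividedDeriv f j) a (prod j b c)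
          - fProduct prod (compNeg (dividedDeriv f j)) b (prod j a c)) :=
        sum_congr rfl fun j _ => finsum_smul_zeroModeTerm hf (htrunc _ _) (htrunc _ _)
    _ = _ := (finsum_eq_sum_range_of_forall_ge fun j hj => by
          simp [fProduct, hJ j hj, hzero]).symm

/-- For a vector space `V` over a field `k` of characteristic zero with integer-indexed
bilinear products satisfying truncation and the Borcherds identity, for all `a b c ∈ V`
and every Laurent series `f ∈ k((x))`:
`(a_{(f)}b)_{(0)}c = ∑_{j≥0} ((-1)^j a_{(∂^{(j)}f)}(b_{(j)}c) − b_{((∂^{(j)}f)(−x))}(a_{(j)}c))`,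
where `∂^{(j)}f = ∑_n C(n,j) f_n x^{n-j}`, i.e. `(∂^{(j)}f)_m = C(m+j, j) f_{m+j}`. -/
theorem fproduct_zero_mode_borcherds {k V : Type*} [Field k] [CharZero k]
    [AddCommGroup V] [Module k V]
    (prod : ℤ → V → V → V)
    (hadd_left : ∀ (n : ℤ) (a a' b : V), prod n (a + a') b = prod n a b + prod n a' b)
    (hsmul_left : ∀ (n : ℤ) (c : k) (a b : V), prod n (c • a) b = c • prod n a b)
    (hadd_right : ∀ (n : ℤ) (a b b' : V), prod n a (b + b') = prod n a b + prod n a b')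
    (hsmul_right : ∀ (n : ℤ) (c : k) (a b : V), prod n a (c • b) = c • prod n a b)
    (htrunc : ∀ a b : V, ∃ N : ℤ, ∀ n ≥ N, prod n a b = 0)
    (hborcherds : ∀ (a b c : V) (m n k₀ : ℤ),
      (∑ᶠ j : ℕ, zBinom k m j • prod (m + k₀ - (j : ℤ)) (prod (n + (j : ℤ)) a b) c)
        = ∑ᶠ j : ℕ, ((-1 : k) ^ j * zBinom k n j) •
            (prod (m + n - (j : ℤ)) a (prod (k₀ + (j : ℤ)) b c)
              - ((-1 : k) ^ n) • prod (n + k₀ - (j : ℤ)) b (prod (m + (j : ℤ)) a c)))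
    (f : ℤ → k) (hf : ∃ N : ℤ, ∀ n < N, f n = 0) (a b c : V) :
    prod 0 (fProduct prod f a b) c
      = ∑ᶠ j : ℕ,
          (((-1 : k) ^ j) •
              fProduct prod (fun m => zBinom k (m + (j : ℤ)) j * f (m + (j : ℤ)))
                a (prod (j : ℤ) b c)
            - fProduct prod
                (fun m => (-1 : k) ^ m * (zBinom k (m + (j : ℤ)) j * f (m + (j : ℤ))))
                b (prod (j : ℤ) a c)) :=
  fproduct_zero_mode_borcherds_general prod hadd_left hsmul_left hsmul_right htrunc hborcherds f hf
    a b c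
end

section
/- For every τ ∈ ℂ with Im τ > 0 and all x, y ∈ ℂ with x, y, x−y ∉ Λ_τ: ℘(x,τ)·℘(y,τ) = ℘′(x−y,τ)·ζ(x−y,τ) − ℘(x−y,τ)² + (1/2)℘″(x−y,τ) + ℘′(x−y,τ)·(ζ(y,τ) − ζ(x,τ)) + ℘(x−y,τ)·(℘(x,τ) + ℘(y,τ)). -/
noncomputable section

open Complex

/-- The lattice `Λ_τ = ℤ + ℤτ ⊂ ℂ`. -/
def ellLattice (τ : ℂ) : Set ℂ := {w | ∃ m n : ℤ, w = (m : ℂ) + (n : ℂ) * τ}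

/-- The quasimodular Eisenstein series
`G₂(τ) = (2πi)²(−1/12 + 2∑_{n≥1} n qⁿ/(1−qⁿ))` where `q = exp(2πiτ)`. -/
def G2 (τ : ℂ) : ℂ :=
  (2 * (Real.pi : ℂ) * I) ^ 2 *
    (-(1 / 12) + 2 * ∑' n : ℕ,
      ((n : ℂ) + 1) * Complex.exp (2 * (Real.pi : ℂ) * I * τ) ^ (n + 1) /
        (1 - Complex.exp (2 * (Real.pi : ℂ) * I * τ) ^ (n + 1)))

/-- The Weierstrass quasielliptic function, normalized as in the paper:
`ζ(z,τ) = z⁻¹ − G₂(τ)z + ∑_{ω ∈ Λ_τ∖{0}} ((z−ω)⁻¹ + ω⁻¹ + z·ω⁻²)`. -/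
def wzeta (z τ : ℂ) : ℂ :=
  z⁻¹ - G2 τ * z +
    ∑' w : {w : ℂ // w ∈ ellLattice τ ∧ w ≠ 0},
      ((z - (w : ℂ))⁻¹ + (w : ℂ)⁻¹ + z * (((w : ℂ)) ^ 2)⁻¹)

/-- The Weierstrass elliptic function, normalized as in the paper:
`℘(z,τ) = z⁻² + G₂(τ) + ∑_{ω ∈ Λ_τ∖{0}} ((z−ω)⁻² − ω⁻²)`. -/
def wp (z τ : ℂ) : ℂ :=
  (z ^ 2)⁻¹ + G2 τ +
    ∑' w : {w : ℂ // w ∈ ellLattice τ ∧ w ≠ 0},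
      (((z - (w : ℂ)) ^ 2)⁻¹ - (((w : ℂ)) ^ 2)⁻¹)

/-- `℘′`, the derivative of `℘` in the variable `z`. -/
def wp' (z τ : ℂ) : ℂ := deriv (fun u => wp u τ) z

/-- `℘″`, the second derivative of `℘` in the variable `z`. -/
def wp'' (z τ : ℂ) : ℂ := deriv (fun u => wp' u τ) z

end

/-!
Let `ζ` and `℘` be the Weierstrass functions of the lattice; the paper's normalization shifts `℘`
by the constant `G₂(τ)` and `ζ` by `-G₂(τ) z`, and both shifts cancel from the identity. Fix `y`
and put `A(x) = ζ(x - y) + ζ(y) - ζ(x)` and `H(x) = A(x)² - ℘(x) - ℘(y) - ℘(x - y)`. Since `ζ' = -℘`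
is periodic, `ζ` is quasi-periodic, which makes `A`, hence `H`, doubly periodic; moreover
`H(y - x) = H(x)`. At `x = y` the square of the simple pole of `ζ(x - y)` cancels the double pole
of `℘(x - y)`, so all singularities of `H` are removable and Liouville's theorem makes `H`
constant. Differentiating `H` in `x` gives `2 A(x) (℘(x) - ℘(x - y)) = ℘'(x) + ℘'(x - y)`, and
differentiating this in `y` gives the identity.
-/

open Filter Topology Set
open scoped PeriodPair

theorem Complex.differentiable_extendFrom_compl {E : Type*} [NormedAddCommGroup E]
    [NormedSpace ℂ E] [CompleteSpace E] {f : ℂ → E} {S : Set ℂ} (hSc : S.Countable)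
    (hS : IsClosed S) (hf : DifferentiableOn ℂ f Sᶜ)
    (hlim : ∀ c ∈ S, ∃ a, Tendsto f (𝓝[Sᶜ] c) (𝓝 a)) :
    Differentiable ℂ (extendFrom Sᶜ f) ∧ EqOn (extendFrom Sᶜ f) f Sᶜ := by
  have hU : IsOpen Sᶜ := hS.isOpen_compl
  have heq : EqOn (extendFrom Sᶜ f) f Sᶜ := extendFrom_extends hf.continuousOn
  have hcont : Continuous (extendFrom Sᶜ f) := by
    refine continuous_extendFrom (hSc.dense_compl ℂ) fun c ↦ ?_
    by_cases hc : c ∈ S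
    · exact hlim c hc
    · exact ⟨f c, hf.continuousOn c hc⟩
  have hdiff : ∀ z ∉ S, DifferentiableAt ℂ (extendFrom Sᶜ f) z := fun z hz ↦
    (hf.differentiableAt (hU.mem_nhds hz)).congr_of_eventuallyEq
      (eventuallyEq_of_mem (hU.mem_nhds hz) heq)
  refine ⟨fun c ↦ ?_, heq⟩
  exact (hasFPowerSeriesOnBall_of_differentiable_off_countable (R := 1) hSc hcont.continuousOn
    (fun z hz ↦ hdiff z hz.2) one_pos).analyticAt.differentiableAt

theorem Filter.Tendsto.of_comp_invariant {X Y : Type*} [TopologicalSpace X] [TopologicalSpace Y]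
    {f : X → Y} {S : Set X} {φ : X → X} {c : X} {a : Y} (hφ : ContinuousAt φ c)
    (hS : ∀ x ∉ S, φ x ∉ S) (hf : ∀ x ∉ S, f (φ x) = f x)
    (h : Tendsto f (𝓝[Sᶜ] (φ c)) (𝓝 a)) : Tendsto f (𝓝[Sᶜ] c) (𝓝 a) :=
  (h.comp (tendsto_nhdsWithin_of_tendsto_nhds_of_eventually_within _
    (hφ.mono_left nhdsWithin_le_nhds) (eventually_nhdsWithin_of_forall hS))).congr'
    (eventually_nhdsWithin_of_forall hf)

theorem tendsto_sq_add_one_div_sub_one_div_sq {C P : ℂ → ℂ} {c : ℂ} (hC : DifferentiableAt ℂ C c)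
    (hC0 : C c = 0) (hP : ContinuousAt P c) :
    Tendsto (fun x ↦ (1 / (x - c) + C x) ^ 2 - 1 / (x - c) ^ 2 - P x) (𝓝[≠] c)
      (𝓝 (2 * deriv C c - P c)) := by
  have hcont : ContinuousAt (fun x ↦ 2 * dslope C c x + C x ^ 2 - P x) c :=
    ((continuousAt_dslope_same.2 hC).const_mul 2 |>.add (hC.continuousAt.pow 2)).sub hP
  convert! (hcont.tendsto.mono_left nhdsWithin_le_nhds).congr'
    (eventually_nhdsWithin_of_forall fun x (hx : x ≠ c) ↦ ?_) using 2
  · simp [hC0]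
  · rw [dslope_of_ne _ hx, slope_def_field, hC0]
    field_simp [sub_ne_zero.2 hx]
    ring

namespace PeriodPair

variable (L : PeriodPair)

lemma countable_lattice : (L.lattice : Set ℂ).Countable :=
  Set.countable_coe_iff.1 (inferInstanceAs (Countable L.lattice))

lemma isPreconnected_compl_lattice : IsPreconnected (L.lattice : Set ℂ)ᶜ :=
  (L.countable_lattice.isConnected_compl_of_one_lt_rank (by simp)).isPreconnected

theorem apply_eq_apply_of_differentiable_of_periodic {E : Type*} [NormedAddCommGroup E]
    [NormedSpace ℂ E] {g : ℂ → E} (hg : Differentiable ℂ g)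
    (hper : ∀ l : L.lattice, Function.Periodic g l) (z w : ℂ) : g z = g w := by
  have hK : IsCompact (closure (ZSpan.fundamentalDomain L.basis)) :=
    (ZSpan.fundamentalDomain_isBounded L.basis).isCompact_closure
  refine hg.apply_eq_apply_of_bounded ((hK.image hg.continuous).isBounded.subset ?_) z w
  rintro _ ⟨x, rfl⟩
  have hfloor : (ZSpan.floor L.basis x : ℂ) ∈ L.lattice := by
    rw [L.lattice_eq_span_range_basis]; exact (ZSpan.floor L.basis x).2
  refine ⟨ZSpan.fract L.basis x, subset_closure (ZSpan.fract_mem_fundamentalDomain _ x), ?_⟩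
  rw [ZSpan.fract_apply, ← hper ⟨_, hfloor⟩, sub_add_cancel]

theorem apply_eq_apply_of_differentiableOn_compl {f : ℂ → ℂ} {S : Set ℂ} (hSc : S.Countable)
    (hS : IsClosed S) (hf : DifferentiableOn ℂ f Sᶜ)
    (hlim : ∀ c ∈ S, ∃ a, Tendsto f (𝓝[Sᶜ] c) (𝓝 a))
    (hper : ∀ l ∈ L.lattice, ∀ x ∉ S, x + l ∉ S ∧ f (x + l) = f x) {z w : ℂ} (hz : z ∉ S)
    (hw : w ∉ S) : f z = f w := by
  obtain ⟨hg, heq⟩ := Complex.differentiable_extendFrom_compl hSc hS hf hlim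
  have hgper (l : L.lattice) : Function.Periodic (extendFrom Sᶜ f) l := congrFun <|
    Continuous.ext_on (hSc.dense_compl ℂ) (hg.continuous.comp (continuous_add_const _))
      hg.continuous fun x hx ↦ by
        obtain ⟨hxl, hfx⟩ := hper l l.2 x hx
        rw [heq hxl, heq hx, hfx]
  rw [← heq hz, ← heq hw]
  exact L.apply_eq_apply_of_differentiable_of_periodic hg hgper z w

lemma hasDerivAt_weierstrassP {z : ℂ} (hz : z ∉ L.lattice) : HasDerivAt ℘[L] (℘'[L] z) z := by
  simpa using (L.differentiableOn_weierstrassP.differentiableAt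
    (L.isClosed_lattice.isOpen_compl.mem_nhds hz)).hasDerivAt

lemma hasDerivAt_derivWeierstrassP {z : ℂ} (hz : z ∉ L.lattice) :
    HasDerivAt ℘'[L] (deriv ℘'[L] z) z :=
  (L.analyticOnNhd_derivWeierstrassP z hz).differentiableAt.hasDerivAt

noncomputable def weierstrassZetaExcept (l₀ z : ℂ) : ℂ :=
  ∑' l : L.lattice, if l.1 = l₀ then 0 else 1 / (z - l) + 1 / l + z / l ^ 2

lemma norm_weierstrassZetaSummand_le {r : ℝ} (hr : 0 < r) {s l : ℂ} (hs : ‖s‖ < r)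
    (hl : 2 * r ≤ ‖l‖) :
    ‖1 / (s - l) + 1 / l + s / l ^ 2‖ ≤ 2 * r ^ 2 * ‖l‖ ^ (-3 : ℝ) := by
  have hl0 : 0 < ‖l‖ := by linarith
  have hsl : ‖l‖ / 2 ≤ ‖s - l‖ := by
    rw [norm_sub_rev]; linarith [norm_sub_norm_le l s]
  have hsl0 : s - l ≠ 0 := norm_pos_iff.1 (by linarith)
  calc ‖1 / (s - l) + 1 / l + s / l ^ 2‖ = ‖s‖ ^ 2 / (‖l‖ ^ 2 * ‖s - l‖) := by
        rw [show 1 / (s - l) + 1 / l + s / l ^ 2 = s ^ 2 / (l ^ 2 * (s - l)) by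
          field_simp [norm_pos_iff.1 hl0]; ring]
        simp
    _ ≤ r ^ 2 / (‖l‖ ^ 2 * (‖l‖ / 2)) := by gcongr
    _ = 2 * r ^ 2 * ‖l‖ ^ (-3 : ℝ) := by
        rw [Real.rpow_neg hl0.le]; norm_cast; field

lemma hasSumLocallyUniformly_weierstrassZetaExcept (l₀ : ℂ) :
    HasSumLocallyUniformly
      (fun (l : L.lattice) (z : ℂ) ↦ if l.1 = l₀ then 0 else 1 / (z - l) + 1 / l + z / l ^ 2)
      (L.weierstrassZetaExcept l₀) := by
  refine L.hasSumLocallyUniformly_aux (u := fun r l ↦ 2 * r ^ 2 * ‖l‖ ^ (-3 : ℝ)) _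
    (fun _ _ ↦ (ZLattice.summable_norm_rpow _ _ (by simp; norm_num)).mul_left _) fun r hr ↦
    eventually_atTop.mpr ⟨2 * r, ?_⟩
  rintro _ h s hs l rfl
  split_ifs
  · simp only [norm_zero]; positivity
  · exact norm_weierstrassZetaSummand_le hr hs h

lemma hasDerivAt_weierstrassZetaSummand {z l : ℂ} (h : z ≠ l) :
    HasDerivAt (fun z ↦ 1 / (z - l) + 1 / l + z / l ^ 2) (-(1 / (z - l) ^ 2 - 1 / l ^ 2)) z := by
  have h1 := ((hasDerivAt_id' z).sub_const l).fun_inv (sub_ne_zero.2 h)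
  simp only [one_div]
  exact ((h1.add_const l⁻¹).fun_add ((hasDerivAt_id' z).div_const (l ^ 2))).congr_deriv (by ring)

lemma hasDerivAt_weierstrassZetaExcept (l₀ : ℂ) {z : ℂ} (hz : z ∉ (L.lattice : Set ℂ) \ {l₀}) :
    HasDerivAt (L.weierstrassZetaExcept l₀) (-L.weierstrassPExcept l₀ z) z := by
  set F : L.lattice → ℂ → ℂ :=
    fun l z ↦ if l.1 = l₀ then 0 else 1 / (z - l) + 1 / l + z / l ^ 2
  set F' : L.lattice → ℂ → ℂ :=
    fun l z ↦ if l.1 = l₀ then 0 else -(1 / (z - l) ^ 2 - 1 / l ^ 2)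
  set U : Set ℂ := ((L.lattice : Set ℂ) \ {l₀})ᶜ
  have hU : IsOpen U := L.isOpen_compl_lattice_sdiff
  have hF : ∀ l, ∀ w ∈ U, HasDerivAt (F l) (F' l w) w := by
    intro l w hw
    simp only [F, F']
    split_ifs with hl
    · exact hasDerivAt_const _ _
    · exact hasDerivAt_weierstrassZetaSummand fun h ↦ hw ⟨h ▸ l.2, h ▸ hl⟩
  have hdiff : ∀ s : Finset L.lattice, DifferentiableOn ℂ (fun w ↦ ∑ l ∈ s, F l w) U :=
    fun s ↦ .fun_sum fun l _ w hw ↦ (hF l w hw).differentiableAt.differentiableWithinAt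
  have hlim :=
    (L.hasSumLocallyUniformly_weierstrassZetaExcept l₀).tendstoLocallyUniformlyOn (s := U)
  have hderiv : Tendsto (fun s : Finset L.lattice ↦ ∑ l ∈ s, F' l z) atTop
      (𝓝 (deriv (L.weierstrassZetaExcept l₀) z)) :=
    ((hlim.deriv (.of_forall hdiff) hU).tendsto_at hz).congr fun s ↦ by
      rw [Function.comp_apply, deriv_fun_sum fun l _ ↦ (hF l z hz).differentiableAt]
      exact Finset.sum_congr rfl fun l _ ↦ (hF l z hz).deriv
  have hsum : HasSum (fun l ↦ F' l z) (-L.weierstrassPExcept l₀ z) := by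
    convert! (L.hasSum_weierstrassPExcept l₀ z).neg using 2 with l
    simp only [F']
    split_ifs <;> simp
  rw [← tendsto_nhds_unique hderiv hsum]
  exact ((hlim.differentiableOn (.of_forall hdiff) hU).differentiableAt
    (hU.mem_nhds hz)).hasDerivAt

noncomputable def weierstrassZeta (z : ℂ) : ℂ := 1 / z + L.weierstrassZetaExcept 0 z

lemma weierstrassPExcept_zero_eq (z : ℂ) : L.weierstrassPExcept 0 z = ℘[L] z - 1 / z ^ 2 := by
  simpa [sub_eq_add_neg] using L.weierstrassPExcept_def 0 z

lemma hasDerivAt_weierstrassZeta {z : ℂ} (hz : z ∉ L.lattice) :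
    HasDerivAt L.weierstrassZeta (-℘[L] z) z := by
  have hz0 : z ≠ 0 := by rintro rfl; exact hz (zero_mem _)
  convert! (hasDerivAt_inv hz0).add
    (L.hasDerivAt_weierstrassZetaExcept 0 fun h ↦ hz h.1) using 1
  · ext; simp [weierstrassZeta]
  · rw [weierstrassPExcept_zero_eq]; ring

lemma weierstrassZetaExcept_neg (l₀ z : ℂ) :
    L.weierstrassZetaExcept l₀ (-z) = -L.weierstrassZetaExcept (-l₀) z := by
  simp only [weierstrassZetaExcept]
  rw [← (Equiv.neg L.lattice).tsum_eq, ← tsum_neg]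
  congr! 2 with l
  simp only [Equiv.neg_apply, NegMemClass.coe_neg, neg_eq_iff_eq_neg]
  split_ifs
  · simp
  · rw [show -z - -l = -(z - l) by ring, div_neg, div_neg, neg_sq]
    ring

@[simp] lemma weierstrassZeta_neg (z : ℂ) : L.weierstrassZeta (-z) = -L.weierstrassZeta z := by
  simp only [weierstrassZeta, weierstrassZetaExcept_neg, neg_zero, one_div, inv_neg]
  ring

@[simp] lemma weierstrassZetaExcept_zero (l₀ : ℂ) : L.weierstrassZetaExcept l₀ 0 = 0 := by
  simp [weierstrassZetaExcept]

lemma weierstrassZeta_add_coe_sub_eq (l : L.lattice) {z w : ℂ} (hz : z ∉ L.lattice)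
    (hw : w ∉ L.lattice) :
    L.weierstrassZeta (z + l) - L.weierstrassZeta z =
      L.weierstrassZeta (w + l) - L.weierstrassZeta w := by
  have hderiv : ∀ u ∉ L.lattice,
      HasDerivAt (fun u ↦ L.weierstrassZeta (u + l) - L.weierstrassZeta u) 0 u := by
    intro u hu
    have hul : u + l ∉ L.lattice := (L.lattice.add_mem_iff_left l.2).not.2 hu
    have h := ((L.hasDerivAt_weierstrassZeta hul).comp_add_const u l).fun_sub
      (L.hasDerivAt_weierstrassZeta hu)
    rwa [L.weierstrassP_add_coe, sub_self] at h
  exact L.isClosed_lattice.isOpen_compl.is_const_of_deriv_eq_zero L.isPreconnected_compl_lattice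
    (fun u hu ↦ (hderiv u hu).differentiableAt.differentiableWithinAt)
    (fun u hu ↦ (hderiv u hu).deriv) hz hw

section AdditionTheorem

variable {x y : ℂ}

noncomputable def zetaDefect (y x : ℂ) : ℂ :=
  L.weierstrassZeta (x - y) + L.weierstrassZeta y - L.weierstrassZeta x

/-- Frobenius–Stickelberger defect: constant in `x` by `fsDefect_eq`. -/
noncomputable def fsDefect (y x : ℂ) : ℂ :=
  L.zetaDefect y x ^ 2 - ℘[L] x - ℘[L] y - ℘[L] (x - y)

def singularSet (y : ℂ) : Set ℂ := (L.lattice : Set ℂ) ∪ (· - y) ⁻¹' L.lattice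

lemma notMem_singularSet_iff : x ∉ L.singularSet y ↔ x ∉ L.lattice ∧ x - y ∉ L.lattice := by
  simp [singularSet]

lemma isClosed_singularSet : IsClosed (L.singularSet y) :=
  L.isClosed_lattice.union (L.isClosed_lattice.preimage (continuous_sub_right y))

lemma countable_singularSet : (L.singularSet y).Countable :=
  L.countable_lattice.union (L.countable_lattice.preimage (sub_left_injective))

lemma add_notMem_singularSet {l : ℂ} (hl : l ∈ L.lattice) (hx : x ∉ L.singularSet y) :
    x + l ∉ L.singularSet y := by
  rw [notMem_singularSet_iff, add_sub_right_comm] at *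
  exact ⟨(L.lattice.add_mem_iff_left hl).not.2 hx.1, (L.lattice.add_mem_iff_left hl).not.2 hx.2⟩

lemma sub_notMem_singularSet (hx : x ∉ L.singularSet y) : y - x ∉ L.singularSet y := by
  rw [notMem_singularSet_iff] at *
  rw [sub_sub_cancel_left, ← neg_sub, neg_mem_iff, neg_mem_iff]
  exact hx.symm

lemma hasDerivAt_fsDefect (hx : x ∉ L.singularSet y) :
    HasDerivAt (L.fsDefect y)
      (2 * L.zetaDefect y x * (℘[L] x - ℘[L] (x - y)) - ℘'[L] x - ℘'[L] (x - y)) x := by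
  obtain ⟨hx, hxy⟩ := L.notMem_singularSet_iff.1 hx
  have hD : HasDerivAt (L.zetaDefect y) (℘[L] x - ℘[L] (x - y)) x := by
    refine ((L.hasDerivAt_weierstrassZeta hxy).comp_sub_const x y).add_const
      (L.weierstrassZeta y) |>.fun_sub (L.hasDerivAt_weierstrassZeta hx) |>.congr_deriv ?_
    ring
  refine ((hD.fun_pow 2).fun_sub (L.hasDerivAt_weierstrassP hx)).sub_const (℘[L] y) |>.fun_sub
    ((L.hasDerivAt_weierstrassP hxy).comp_sub_const x y) |>.congr_deriv ?_
  ring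

lemma fsDefect_add {l : ℂ} (hl : l ∈ L.lattice) (hx : x ∉ L.singularSet y) :
    L.fsDefect y (x + l) = L.fsDefect y x := by
  obtain ⟨hx, hxy⟩ := L.notMem_singularSet_iff.1 hx
  have hζ := L.weierstrassZeta_add_coe_sub_eq ⟨l, hl⟩ hxy hx
  have hD : L.zetaDefect y (x + l) = L.zetaDefect y x := by
    simp only [zetaDefect, add_sub_right_comm x l y]
    linear_combination hζ
  have h℘ (z : ℂ) : ℘[L] (z + l) = ℘[L] z := L.weierstrassP_add_coe z ⟨l, hl⟩
  simp only [fsDefect, hD, h℘, add_sub_right_comm x l y]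

lemma fsDefect_sub (x : ℂ) : L.fsDefect y (y - x) = L.fsDefect y x := by
  simp only [fsDefect, zetaDefect, sub_sub_cancel_left, weierstrassZeta_neg, weierstrassP_neg]
  rw [← neg_sub x y, weierstrassZeta_neg, weierstrassP_neg]
  ring

variable (hy : y ∉ L.lattice)
include hy

-- The square of the simple pole of `ζ(x - y)` cancels the double pole of `℘(x - y)`.
lemma exists_tendsto_fsDefect_self : ∃ a, Tendsto (L.fsDefect y) (𝓝[≠] y) (𝓝 a) := by
  have hC : DifferentiableAt ℂ (fun x ↦ L.weierstrassZetaExcept 0 (x - y) +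
      L.weierstrassZeta y - L.weierstrassZeta x) y := by
    refine (((L.hasDerivAt_weierstrassZetaExcept 0 ?_).comp_sub_const y y).add_const _ |>.fun_sub
      (L.hasDerivAt_weierstrassZeta hy)).differentiableAt
    simp
  have hP : ContinuousAt (fun x ↦ L.weierstrassPExcept 0 (x - y) + ℘[L] x + ℘[L] y) y := by
    have h0 : ContinuousAt (L.weierstrassPExcept 0) (y - y) := by
      rw [sub_self]
      exact (L.differentiableOn_weierstrassPExcept 0).continuousOn.continuousAt
        (L.compl_lattice_sdiff_singleton_mem_nhds 0)
    exact ((h0.comp (f := fun x ↦ x - y) (by fun_prop)).add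
      (L.hasDerivAt_weierstrassP hy).continuousAt).add continuousAt_const
  refine ⟨_, (tendsto_sq_add_one_div_sub_one_div_sq hC (by simp) hP).congr fun x ↦ ?_⟩
  simp only [fsDefect, zetaDefect, weierstrassZeta, weierstrassPExcept_zero_eq]
  ring

lemma exists_tendsto_fsDefect {c : ℂ} (hc : c ∈ L.singularSet y) :
    ∃ a, Tendsto (L.fsDefect y) (𝓝[(L.singularSet y)ᶜ] c) (𝓝 a) := by
  obtain ⟨a, ha⟩ := L.exists_tendsto_fsDefect_self hy
  replace ha : Tendsto (L.fsDefect y) (𝓝[(L.singularSet y)ᶜ] y) (𝓝 a) :=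
    ha.mono_left (nhdsWithin_mono _ fun x hx h ↦ hx (Or.inr (by
      rw [Set.mem_singleton_iff.1 h, Set.mem_preimage, sub_self]; exact zero_mem _)))
  refine ⟨a, ?_⟩
  -- A symmetry of `fsDefect y` carries `c` to `y`.
  rcases hc with hc | hc
  · refine Tendsto.of_comp_invariant (φ := fun x ↦ y - (x + -c)) (by fun_prop)
      (fun x hx ↦ L.sub_notMem_singularSet (L.add_notMem_singularSet (neg_mem hc) hx))
      (fun x hx ↦ ?_) (by simpa using ha)
    rw [L.fsDefect_sub, L.fsDefect_add (neg_mem hc) hx]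
  · exact Tendsto.of_comp_invariant (φ := fun x ↦ x + -(c - y)) (by fun_prop)
      (fun x hx ↦ L.add_notMem_singularSet (neg_mem hc) hx)
      (fun x hx ↦ L.fsDefect_add (neg_mem hc) hx) (by simpa using ha)

lemma fsDefect_eq {w : ℂ} (hx : x ∉ L.singularSet y) (hw : w ∉ L.singularSet y) :
    L.fsDefect y x = L.fsDefect y w :=
  L.apply_eq_apply_of_differentiableOn_compl L.countable_singularSet L.isClosed_singularSet
    (fun _ hx ↦ (L.hasDerivAt_fsDefect hx).differentiableAt.differentiableWithinAt)
    (fun _ hc ↦ L.exists_tendsto_fsDefect hy hc)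
    (fun _ hl _ hx ↦ ⟨L.add_notMem_singularSet hl hx, L.fsDefect_add hl hx⟩) hx hw

lemma two_mul_zetaDefect_mul (hx : x ∉ L.lattice) (hxy : x - y ∉ L.lattice) :
    2 * L.zetaDefect y x * (℘[L] x - ℘[L] (x - y)) = ℘'[L] x + ℘'[L] (x - y) := by
  have hxS : x ∉ L.singularSet y := L.notMem_singularSet_iff.2 ⟨hx, hxy⟩
  have hconst : L.fsDefect y =ᶠ[𝓝 x] fun _ ↦ L.fsDefect y x :=
    eventually_of_mem (L.isClosed_singularSet.isOpen_compl.mem_nhds hxS) fun w hw ↦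
      L.fsDefect_eq hy hw hxS
  linear_combination
    (L.hasDerivAt_fsDefect hxS).unique ((hasDerivAt_const x _).congr_of_eventuallyEq hconst)

theorem derivWeierstrassP_mul_zetaDefect_add (hx : x ∉ L.lattice) (hxy : x - y ∉ L.lattice) :
    ℘'[L] (x - y) * L.zetaDefect y x + deriv ℘'[L] (x - y) / 2 =
      (℘[L] (x - y) - ℘[L] x) * (℘[L] (x - y) - ℘[L] y) := by
  set F : ℂ → ℂ := fun y ↦ 2 * L.zetaDefect y x * (℘[L] x - ℘[L] (x - y)) - ℘'[L] x - ℘'[L] (x - y)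
  have hV : IsOpen ((L.lattice : Set ℂ)ᶜ ∩ (x - ·) ⁻¹' (L.lattice : Set ℂ)ᶜ) :=
    L.isClosed_lattice.isOpen_compl.inter
      (L.isClosed_lattice.isOpen_compl.preimage (continuous_sub_left x))
  have hF0 : F =ᶠ[𝓝 y] fun _ ↦ 0 := eventually_of_mem (hV.mem_nhds ⟨hy, hxy⟩) fun y' hy' ↦ by
    simp only [F, L.two_mul_zetaDefect_mul hy'.1 hx hy'.2]
    ring
  have hD : HasDerivAt (L.zetaDefect · x) (℘[L] (x - y) - ℘[L] y) y := by
    refine ((L.hasDerivAt_weierstrassZeta hxy).comp_const_sub x y).fun_add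
      (L.hasDerivAt_weierstrassZeta hy) |>.sub_const _ |>.congr_deriv ?_
    ring
  have hF : HasDerivAt F (2 * ((℘[L] (x - y) - ℘[L] y) * (℘[L] x - ℘[L] (x - y)) +
      L.zetaDefect y x * ℘'[L] (x - y)) + deriv ℘'[L] (x - y)) y := by
    refine ((hD.const_mul 2).fun_mul (((L.hasDerivAt_weierstrassP hxy).comp_const_sub x y).const_sub
      (℘[L] x))).sub_const _ |>.fun_sub
      ((L.hasDerivAt_derivWeierstrassP hxy).comp_const_sub x y) |>.congr_deriv ?_
    ring
  linear_combination hF.unique ((hasDerivAt_const y 0).congr_of_eventuallyEq hF0) / 2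

end AdditionTheorem

lemma linearIndependent_one_of_im_pos {τ : ℂ} (hτ : 0 < τ.im) : LinearIndependent ℝ ![1, τ] := by
  refine LinearIndependent.pair_iff.2 fun s t h ↦ ?_
  have him := congrArg Complex.im h
  have hre := congrArg Complex.re h
  simp only [Complex.real_smul, mul_one, Complex.add_im, Complex.ofReal_im, Complex.mul_im,
    Complex.ofReal_re, zero_mul, add_zero, zero_add, Complex.zero_im, mul_eq_zero, Complex.add_re,
    Complex.mul_re, sub_zero, Complex.zero_re] at him hre
  have ht : t = 0 := him.resolve_right hτ.ne'
  subst ht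
  simpa using hre

noncomputable def ofTau {τ : ℂ} (hτ : 0 < τ.im) : PeriodPair :=
  ⟨1, τ, linearIndependent_one_of_im_pos hτ⟩

lemma mem_ofTau_lattice {τ : ℂ} (hτ : 0 < τ.im) {z : ℂ} :
    z ∈ (ofTau hτ).lattice ↔ z ∈ ellLattice τ := by
  simp [mem_lattice, ellLattice, ofTau, eq_comm]

end PeriodPair

section

open PeriodPair

variable {τ : ℂ} (hτ : 0 < τ.im)
include hτ

lemma tsum_ellLattice_ne_zero (F : ℂ → ℂ) :
    ∑' w : {w : ℂ // w ∈ ellLattice τ ∧ w ≠ 0}, F w =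
      ∑' l : (ofTau hτ).lattice, if l.1 = 0 then 0 else F l := calc
  _ = ∑' z, {w | w ∈ ellLattice τ ∧ w ≠ 0}.indicator F z := tsum_subtype _ F
  _ = ∑' z, ((ofTau hτ).lattice : Set ℂ).indicator (fun z ↦ if z = 0 then 0 else F z) z := by
    congr with z
    by_cases hz : z = 0
    · simp [hz]
    · by_cases hzΛ : z ∈ ellLattice τ
      · rw [Set.indicator_of_mem (show z ∈ {w | w ∈ ellLattice τ ∧ w ≠ 0} from ⟨hzΛ, hz⟩),
          Set.indicator_of_mem ((mem_ofTau_lattice hτ).2 hzΛ), if_neg hz]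
      · rw [Set.indicator_of_notMem fun h ↦ hzΛ h.1,
          Set.indicator_of_notMem fun h ↦ hzΛ ((mem_ofTau_lattice hτ).1 h)]
  _ = _ := (tsum_subtype _ _).symm

lemma wp_eq_weierstrassP (z : ℂ) : wp z τ = ℘[ofTau hτ] z + G2 τ := by
  have h := (ofTau hτ).weierstrassPExcept_zero_eq z
  have hsum := tsum_ellLattice_ne_zero hτ fun w ↦ ((z - w) ^ 2)⁻¹ - (w ^ 2)⁻¹
  simp only [weierstrassPExcept, one_div] at h hsum
  rw [wp, hsum, h]
  ring

lemma wzeta_eq_weierstrassZeta (z : ℂ) :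
    wzeta z τ = (ofTau hτ).weierstrassZeta z - G2 τ * z := by
  have hsum := tsum_ellLattice_ne_zero hτ fun w ↦ (z - w)⁻¹ + w⁻¹ + z * (w ^ 2)⁻¹
  simp only [wzeta, hsum, weierstrassZeta, weierstrassZetaExcept, div_eq_mul_inv, one_mul]
  ring

lemma wp'_eq_derivWeierstrassP (z : ℂ) : wp' z τ = ℘'[ofTau hτ] z := by
  simp only [wp', wp_eq_weierstrassP hτ, deriv_add_const, deriv_weierstrassP]

lemma wp''_eq_deriv_derivWeierstrassP (z : ℂ) : wp'' z τ = deriv ℘'[ofTau hτ] z := by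
  simp only [wp'', wp'_eq_derivWeierstrassP hτ]

end

/-- The identity used in the proof of Lemma `lem:2.1.diff`:
`℘(x)℘(y) = ℘′(x−y)ζ(x−y) − ℘(x−y)² + (1/2)℘″(x−y)`
`          + ℘′(x−y)(ζ(y) − ζ(x)) + ℘(x−y)(℘(x) + ℘(y))`. -/
theorem wp_mul_wp_identity (τ : ℂ) (hτ : 0 < τ.im) (x y : ℂ)
    (hx : x ∉ ellLattice τ) (hy : y ∉ ellLattice τ) (hxy : x - y ∉ ellLattice τ) :
    wp x τ * wp y τ
      = wp' (x - y) τ * wzeta (x - y) τ - (wp (x - y) τ) ^ 2 + (1 / 2) * wp'' (x - y) τ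
        + wp' (x - y) τ * (wzeta y τ - wzeta x τ)
        + wp (x - y) τ * (wp x τ + wp y τ) := by
  simp only [← PeriodPair.mem_ofTau_lattice hτ] at hx hy hxy
  have key := (PeriodPair.ofTau hτ).derivWeierstrassP_mul_zetaDefect_add hy hx hxy
  simp only [wp_eq_weierstrassP hτ, wzeta_eq_weierstrassZeta hτ, wp'_eq_derivWeierstrassP hτ,
    wp''_eq_deriv_derivWeierstrassP hτ]
  unfold PeriodPair.zetaDefect at key
  linear_combination -key
end

section
/- Let k be a field of characteristic zero, N ≥ 1 an integer, and α, β, γ ∈ k with 3γ = 1 and α + β + γ = 1. Set α_i = α − i/N, β_i = β − i/N and γ_i = γ − i/N for 0 ≤ i ≤ N. Then in the polynomial ring k[e₀, h₀, f₀, e₁, h₁, f₁, …] the following identity holds: ∑_{i=0}^{N} α_i · f_i · [eh]_{N−i} + ∑_{i=0}^{N} β_i · e_i · [hf]_{N−i} + ∑_{i=0}^{N} γ_i · h_i · [ef − h²]_{N−i} = 0. -/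
open scoped BigOperators
/-- The variable `e_n` in `k[e₀,h₀,f₀,e₁,h₁,f₁,…] = MvPolynomial (Fin 3 × ℕ) k`. -/
noncomputable def eVar (k : Type*) [CommRing k] (n : ℕ) : MvPolynomial (Fin 3 × ℕ) k :=
  MvPolynomial.X (0, n)

/-- The variable `h_n`. -/
noncomputable def hVar (k : Type*) [CommRing k] (n : ℕ) : MvPolynomial (Fin 3 × ℕ) k :=
  MvPolynomial.X (1, n)

/-- The variable `f_n`. -/
noncomputable def fVar (k : Type*) [CommRing k] (n : ℕ) : MvPolynomial (Fin 3 × ℕ) k :=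
  MvPolynomial.X (2, n)

/-- `[e²]_m = ∑_{p+q=m} e_p e_q`. -/
noncomputable def eeCoef (k : Type*) [CommRing k] (m : ℕ) : MvPolynomial (Fin 3 × ℕ) k :=
  ∑ p ∈ Finset.HasAntidiagonal.antidiagonal m, eVar k p.1 * eVar k p.2

/-- `[eh]_m = ∑_{p+q=m} e_p h_q`. -/
noncomputable def ehCoef (k : Type*) [CommRing k] (m : ℕ) : MvPolynomial (Fin 3 × ℕ) k :=
  ∑ p ∈ Finset.HasAntidiagonal.antidiagonal m, eVar k p.1 * hVar k p.2

/-- `[hf]_m = ∑_{p+q=m} h_p f_q`. -/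
noncomputable def hfCoef (k : Type*) [CommRing k] (m : ℕ) : MvPolynomial (Fin 3 × ℕ) k :=
  ∑ p ∈ Finset.HasAntidiagonal.antidiagonal m, hVar k p.1 * fVar k p.2

/-- `[ef − h²]_m = ∑_{p+q=m} (e_p f_q − h_p h_q)`. -/
noncomputable def efh2Coef (k : Type*) [CommRing k] (m : ℕ) : MvPolynomial (Fin 3 × ℕ) k :=
  ∑ p ∈ Finset.HasAntidiagonal.antidiagonal m, (eVar k p.1 * fVar k p.2 - hVar k p.1 * hVar k p.2)

/-!
Write `e(t), h(t), f(t)` for the generating series and `θ = t d/dt` for the Euler derivation,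
which multiplies the `n`-th coefficient by `n`. The weight `i ↦ c - i/N` on the `i`-th coefficient
of a series `φ` is the series `c φ - N⁻¹ θφ`, so the left-hand side is the `t^N`-coefficient of
`(α f - N⁻¹ θf) e h + (β e - N⁻¹ θe) h f + (γ h - N⁻¹ θh)(e f - h²)`.
By the Leibniz rule, `α + β + γ = 1` and `3γ = 1` this series equals
`(Ψ - N⁻¹ θΨ) - γ (h³ - N⁻¹ θ(h³))` with `Ψ = e h f`, and `φ - N⁻¹ θφ` has vanishing
`t^N`-coefficient for every `φ`.
-/

namespace PowerSeries

section CommSemiring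

variable {R : Type*} [CommSemiring R]

variable (R) in
noncomputable def euler : Derivation R R⟦X⟧ R⟦X⟧ := (X : R⟦X⟧) • d⁄dX R

theorem euler_apply (φ : R⟦X⟧) : euler R φ = X * d⁄dX R φ := rfl

theorem coeff_euler (φ : R⟦X⟧) (n : ℕ) : coeff n (euler R φ) = n * coeff n φ := by
  cases n with
  | zero => simp [euler_apply]
  | succ n => rw [euler_apply, coeff_succ_X_mul, coeff_derivative, mul_comm]; push_cast; rfl

theorem euler_mul (φ ψ : R⟦X⟧) : euler R (φ * ψ) = euler R φ * ψ + φ * euler R ψ := by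
  rw [Derivation.leibniz, smul_eq_mul, smul_eq_mul]; ring

end CommSemiring

variable {R : Type*} [CommRing R]

theorem coeff_sub_smul_euler_eq_zero {ν : R} {n : ℕ} (hν : ν * n = 1) (φ : R⟦X⟧) :
    coeff n (φ - ν • euler R φ) = 0 := by
  rw [map_sub, coeff_smul, coeff_euler, smul_eq_mul, ← mul_assoc, hν, one_mul, sub_self]

theorem sum_range_affine_mul_coeff (c ν : R) (a : ℕ → R) (ψ : R⟦X⟧) (n : ℕ) :
    ∑ i ∈ Finset.range (n + 1), (c - i * ν) * (a i * coeff (n - i) ψ)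
      = coeff n ((c • mk a - ν • euler R (mk a)) * ψ) := by
  rw [coeff_mul, Finset.Nat.sum_antidiagonal_eq_sum_range_succ
    (fun i j => coeff i (c • mk a - ν • euler R (mk a)) * coeff j ψ)]
  refine Finset.sum_congr rfl fun i _ => ?_
  simp only [map_sub, coeff_smul, coeff_euler, coeff_mk, smul_eq_mul]
  ring

theorem sl2_syzygy_series {a b g ν : R} (habg : a + b + g = 1) (hg : 3 * g = 1)
    (e h f : R⟦X⟧) :
    (a • f - ν • euler R f) * (e * h) + (b • e - ν • euler R e) * (h * f)
        + (g • h - ν • euler R h) * (e * f - h * h)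
      = (e * h * f - ν • euler R (e * h * f)) - g • (h * h * h - ν • euler R (h * h * h)) := by
  have habg' : C a + C b + C g = (1 : R⟦X⟧) := by rw [← map_add, ← map_add, habg, map_one]
  have hg' : 3 * C g = (1 : R⟦X⟧) := by rw [← map_ofNat C 3, ← map_mul, hg, map_one]
  simp only [euler_mul, smul_eq_C_mul]
  linear_combination (e * h * f) * habg' - (h * h * euler R h * C ν) * hg'

end PowerSeries

section GeneratingSeries

open PowerSeries

variable (k : Type*) [CommRing k]

theorem ehCoef_eq_coeff (m : ℕ) : ehCoef k m = coeff m (mk (eVar k) * mk (hVar k)) := by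
  simp [ehCoef, coeff_mul]

theorem hfCoef_eq_coeff (m : ℕ) : hfCoef k m = coeff m (mk (hVar k) * mk (fVar k)) := by
  simp [hfCoef, coeff_mul]

theorem efh2Coef_eq_coeff (m : ℕ) :
    efh2Coef k m = coeff m (mk (eVar k) * mk (fVar k) - mk (hVar k) * mk (hVar k)) := by
  simp [efh2Coef, coeff_mul, Finset.sum_sub_distrib]

end GeneratingSeries

open PowerSeries in
/-- Equation `EHversusHFb`: for `N ≥ 1` and `α, β, γ ∈ k` with `3γ = 1` and
`α + β + γ = 1`, setting `α_i = α − i/N`, `β_i = β − i/N`, `γ_i = γ − i/N`, one has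
`∑_{i=0}^N α_i f_i [eh]_{N−i} + ∑_{i=0}^N β_i e_i [hf]_{N−i}`
`  + ∑_{i=0}^N γ_i h_i [ef−h²]_{N−i} = 0`. -/
theorem sl2_syzygy_two (k : Type*) [Field k] [CharZero k] (N : ℕ) (hN : 1 ≤ N)
    (α β γ : k) (h1 : 3 * γ = 1) (h2 : α + β + γ = 1) :
    (∑ i ∈ Finset.range (N + 1),
        MvPolynomial.C (α - (i : k) / (N : k)) * (fVar k i * ehCoef k (N - i)))
      + (∑ i ∈ Finset.range (N + 1),
          MvPolynomial.C (β - (i : k) / (N : k)) * (eVar k i * hfCoef k (N - i)))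
      + (∑ i ∈ Finset.range (N + 1),
          MvPolynomial.C (γ - (i : k) / (N : k)) * (hVar k i * efh2Coef k (N - i))) = 0 := by
  have hNk : (N : k) ≠ 0 := Nat.cast_ne_zero.mpr (by omega)
  have hν : MvPolynomial.C (N : k)⁻¹ * (N : MvPolynomial (Fin 3 × ℕ) k) = 1 := by
    rw [← map_natCast MvPolynomial.C, ← map_mul, inv_mul_cancel₀ hNk, map_one]
  have weight (c : k) (i : ℕ) :
      MvPolynomial.C (c - i / N)
        = MvPolynomial.C c - (i : MvPolynomial (Fin 3 × ℕ) k) * MvPolynomial.C (N : k)⁻¹ := by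
    simp [div_eq_mul_inv]
  have habg :
      MvPolynomial.C α + MvPolynomial.C β + MvPolynomial.C γ = (1 : MvPolynomial (Fin 3 × ℕ) k) := by
    rw [← map_add, ← map_add, h2, map_one]
  have hg : 3 * MvPolynomial.C γ = (1 : MvPolynomial (Fin 3 × ℕ) k) := by
    rw [← map_ofNat MvPolynomial.C 3, ← map_mul, h1, map_one]
  simp only [weight, ehCoef_eq_coeff, hfCoef_eq_coeff, efh2Coef_eq_coeff,
    sum_range_affine_mul_coeff]
  rw [← map_add, ← map_add, sl2_syzygy_series habg hg, map_sub, coeff_smul,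
    coeff_sub_smul_euler_eq_zero hν, coeff_sub_smul_euler_eq_zero hν, smul_zero, sub_zero]
end

section
/- Let S be a finite subset of the k-subalgebra of A generated by the variables x_{i,0} (1 ≤ i ≤ n), and let I ⊆ A be the ideal generated by all iterated derivatives {∂^j(f) : f ∈ S, j ∈ ℕ}. Then I is ∂-stable, and for the quotient B = A/I with induced derivation ∂̄ one has ker ι = W; that is, every Kähler differential ω ∈ Ω_{B/k} with ι(ω) = 0 is a B-linear combination of elements (∂̄c)·dc′ − (∂̄c′)·dc. (This is the implication of the theorem asserting that the degree −1 Koszul homology of the arc algebra of a finite type algebra vanishes: B is the coordinate ring of the arc space of Spec(k[x_{1,0},…,x_{n,0}]/(S)).) -/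
/-- The canonical derivation `∂` of the arc-space polynomial ring
`A = k[x_{i,j} : 1 ≤ i ≤ n, j ∈ ℕ]`, determined by `∂x_{i,j} = x_{i,j+1}`. -/
noncomputable def arcDerivation (k : Type*) [CommRing k] (n : ℕ) :
    Derivation k (MvPolynomial (Fin n × ℕ) k) (MvPolynomial (Fin n × ℕ) k) :=
  MvPolynomial.mkDerivation k (fun p : Fin n × ℕ => MvPolynomial.X (p.1, p.2 + 1))

/-!
Let `ι : Ω[A⁄k] → A` be the contraction with `∂`. The module `Ω[A⁄k]` is free on the
`dx_{i,j}`, which `ι` sends to the distinct variables `x_{i,j+1}`, so the kernel of `ι` is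
spanned by the Koszul relations `∂a • db - ∂b • da`.

Lift `ω ∈ ker ι_B` to `η ∈ Ω[A⁄k]`, so that `ι η ∈ I`. A generator `∂^{j+1} f` of `I` equals
`ι (d ∂^j f)`. For `f ∈ S ⊆ k[x_{i,0}]` and any `c`, the product `c f` differs from `ε(c) f` by
an element of `ι (I • Ω[A⁄k])`, where `ε` kills the variables of positive weight; as
`ε ∘ ι = 0`, the terms `ε(c) f` cancel in `ι η`. Hence `η` is a Koszul relation plus an element
of `I • Ω[A⁄k] + A • dI`, and the latter dies in `Ω[B⁄k]`.
-/

open MvPolynomial KaehlerDifferential Submodule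

section Koszul

variable {A M ι : Type*} [CommRing A] [AddCommGroup M] [Module A M]

def koszulRelations (f : M →ₗ[A] A) (b : ι → M) : Set M :=
  {w | ∃ p q, w = f (b p) • b q - f (b q) • b p}

theorem span_koszulRelations_le_ker (f : M →ₗ[A] A) (b : ι → M) :
    span A (koszulRelations f b) ≤ LinearMap.ker f := by
  rw [span_le]
  rintro _ ⟨p, q, rfl⟩
  simp [mul_comm]

theorem smul_sub_smul_mem_span_koszulRelations (f : M →ₗ[A] A) (b : ι → M) (p : ι) {u : M}
    (hu : u ∈ span A (Set.range b)) :
    f u • b p - f (b p) • u ∈ span A (koszulRelations f b) := by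
  induction hu using span_induction with
  | mem _ hx =>
    obtain ⟨q, rfl⟩ := hx
    exact subset_span ⟨q, p, rfl⟩
  | zero => simp
  | add x y _ _ hx hy =>
    convert add_mem hx hy using 1
    simp only [map_add, add_smul, smul_add]
    abel
  | smul a x _ hx =>
    convert smul_mem _ a hx using 1
    simp only [map_smul, smul_eq_mul, mul_smul, smul_sub, smul_comm a]

end Koszul

theorem MvPolynomial.mem_ideal_span_X_image_of_X_mul_mem {R σ : Type*} [CommSemiring R]
    {s : Set σ} {i : σ} (hi : i ∉ s) {x : MvPolynomial σ R}
    (h : X i * x ∈ Ideal.span (X '' s)) : x ∈ Ideal.span (X '' s) := by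
  rw [mem_ideal_span_X_image] at h ⊢
  intro m hm
  obtain ⟨j, hj, hmj⟩ := h (Finsupp.single i 1 + m) (by
    rw [support_X_mul]
    exact Finset.mem_map_of_mem _ hm)
  have hji : i ≠ j := fun h => hi (h ▸ hj)
  exact ⟨j, hj, by simpa [Finsupp.single_apply, hji] using hmj⟩

theorem MvPolynomial.ker_le_span_koszulRelations {R σ ι M : Type*} [CommRing R]
    [AddCommGroup M] [Module (MvPolynomial σ R) M]
    (f : M →ₗ[MvPolynomial σ R] MvPolynomial σ R) (b : ι → M)
    (hb : span (MvPolynomial σ R) (Set.range b) = ⊤) (s : ι → σ) (hs : s.Injective)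
    (hf : ∀ i, f (b i) = X (s i)) :
    LinearMap.ker f ≤ span (MvPolynomial σ R) (koszulRelations f b) := by
  classical
  suffices key : ∀ T : Finset ι, ∀ v ∈ span (MvPolynomial σ R) (b '' T), f v = 0 →
      v ∈ span (MvPolynomial σ R) (koszulRelations f b) by
    intro v hv
    obtain ⟨c, rfl⟩ := Finsupp.mem_span_range_iff_exists_finsupp.mp (hb ▸ mem_top : v ∈ _)
    exact key c.support _ (sum_mem fun i hi => smul_mem _ _ (subset_span ⟨i, hi, rfl⟩)) hv
  intro T
  induction T using Finset.induction_on with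
  | empty => simp
  | insert p T hp ih =>
    intro v hv hfv
    have hmap : (span (MvPolynomial σ R) (b '' T)).map f = Ideal.span (X '' (s '' T)) := by
      rw [map_span, Set.image_image, Set.image_image]
      simp only [hf]
    rw [Finset.coe_insert, Set.image_insert_eq, mem_span_insert] at hv
    obtain ⟨a, z, hz, rfl⟩ := hv
    -- `X (s p) * a = -f z` lies in the ideal of the other variables, hence so does `a`.
    have ha : a ∈ Ideal.span (X '' (s '' T)) := by
      refine mem_ideal_span_X_image_of_X_mul_mem (i := s p) (by simpa [hs.eq_iff]) ?_
      have : X (s p) * a = -f z := by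
        rw [map_add, map_smul, hf] at hfv
        linear_combination (exp := 1) hfv
      rw [this, ← hmap]
      exact neg_mem (mem_map_of_mem hz)
    rw [← hmap] at ha
    obtain ⟨z', hz', rfl⟩ := ha
    have hκ := smul_sub_smul_mem_span_koszulRelations f b p (hb ▸ mem_top : z' ∈ _)
    have hrest : f z' • b p + z - (f z' • b p - f (b p) • z') ∈
        span (MvPolynomial σ R) (koszulRelations f b) := by
      refine ih _ ?_ ?_
      · convert add_mem hz (smul_mem _ (f (b p)) hz') using 1
        abel
      · rw [map_sub, hfv, LinearMap.mem_ker.mp (span_koszulRelations_le_ker f b hκ), sub_zero]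
    convert add_mem hrest hκ using 1
    abel

theorem MvPolynomial.span_range_D_X (R σ : Type*) [CommRing R] :
    span (MvPolynomial σ R) (Set.range fun i => D R (MvPolynomial σ R) (X i)) = ⊤ := by
  rw [← (mvPolynomialBasis R σ).span_eq]
  simp only [← mvPolynomialBasis_apply]

theorem Derivation.apply_mem_ideal_span {R A : Type*} [CommRing R] [CommRing A] [Algebra R A]
    (d : Derivation R A A) {G : Set A} (hG : ∀ g ∈ G, d g ∈ Ideal.span G) {a : A}
    (ha : a ∈ Ideal.span G) : d a ∈ Ideal.span G := by
  induction ha using span_induction with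
  | mem g hg => exact hG g hg
  | zero => simp
  | add x y _ _ hx hy => rw [map_add]; exact add_mem hx hy
  | smul c x hx ihx =>
    rw [smul_eq_mul, d.leibniz]
    exact add_mem (Ideal.mul_mem_left _ _ ihx) (Ideal.mul_mem_right _ _ hx)

section Arc

variable (k : Type*) [CommRing k] (n : ℕ)

local notation "𝔸" => MvPolynomial (Fin n × ℕ) k

@[simp]
theorem arcDerivation_X (p : Fin n × ℕ) : arcDerivation k n (X p) = X (p.1, p.2 + 1) :=
  mkDerivation_X _ _ _

def arcGenerators (S : Set 𝔸) : Set 𝔸 :=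
  {g | ∃ f ∈ S, ∃ j : ℕ, g = (fun a => arcDerivation k n a)^[j] f}

variable {k n} in
theorem arcDerivation_mem_arcGenerators {S : Set 𝔸} {g : 𝔸} (hg : g ∈ arcGenerators k n S) :
    arcDerivation k n g ∈ arcGenerators k n S := by
  obtain ⟨f, hf, j, rfl⟩ := hg
  exact ⟨f, hf, j + 1, (Function.iterate_succ_apply' _ j f).symm⟩

variable {k n} in
theorem mem_or_exists_eq_arcDerivation_of_mem_arcGenerators {S : Set 𝔸} {g : 𝔸}
    (hg : g ∈ arcGenerators k n S) :
    g ∈ S ∨ ∃ g' ∈ arcGenerators k n S, g = arcDerivation k n g' := by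
  obtain ⟨f, hf, _ | j, rfl⟩ := hg
  · exact .inl hf
  · exact .inr ⟨_, ⟨f, hf, j, rfl⟩, Function.iterate_succ_apply' _ j f⟩

theorem ker_liftKaehlerDifferential_arcDerivation_le :
    LinearMap.ker (arcDerivation k n).liftKaehlerDifferential ≤
      span 𝔸 (koszulRelations (arcDerivation k n).liftKaehlerDifferential
        fun p => D k 𝔸 (X p)) :=
  ker_le_span_koszulRelations _ _ (span_range_D_X k _) (fun p => (p.1, p.2 + 1))
    (fun p q h => by simpa [Prod.ext_iff] using h) (by simp)

noncomputable def weightZeroPart : 𝔸 →ₐ[k] 𝔸 :=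
  aeval fun p => if p.2 = 0 then X p else 0

@[simp]
theorem weightZeroPart_X (p : Fin n × ℕ) :
    weightZeroPart k n (X p) = if p.2 = 0 then X p else 0 :=
  aeval_X _ _

theorem weightZeroPart_liftKaehlerDifferential (η : Ω[𝔸⁄k]) :
    weightZeroPart k n ((arcDerivation k n).liftKaehlerDifferential η) = 0 := by
  have hη : η ∈ span 𝔸 (Set.range fun p => D k 𝔸 (X p)) := by
    rw [span_range_D_X]; trivial
  induction hη using span_induction with
  | mem _ hx => obtain ⟨p, rfl⟩ := hx; simp
  | zero => simp
  | add x y _ _ hx hy => simp [hx, hy]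
  | smul a x _ hx => simp [hx]

theorem sub_weightZeroPart_mem_range (c : 𝔸) :
    c - weightZeroPart k n c ∈ LinearMap.range (arcDerivation k n).liftKaehlerDifferential := by
  induction c using MvPolynomial.induction_on with
  | C a => simp [weightZeroPart]
  | add p q hp hq =>
    convert add_mem hp hq using 1
    rw [map_add]; ring
  | mul_X c p ih =>
    obtain ⟨i, _ | j⟩ := p
    · convert smul_mem _ (X (i, 0)) ih using 1
      simp; ring
    · refine ⟨c • D k 𝔸 (X (i, j)), ?_⟩
      simp

theorem weightZeroPart_eq_self_of_mem_adjoin {f : 𝔸}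
    (hf : f ∈ Algebra.adjoin k (Set.range fun i : Fin n => (X (i, 0) : 𝔸))) :
    weightZeroPart k n f = f := by
  induction hf using Algebra.adjoin_induction with
  | mem _ hx => obtain ⟨i, rfl⟩ := hx; simp
  | algebraMap r => exact AlgHom.commutes _ r
  | add x y _ _ hx hy => rw [map_add, hx, hy]
  | mul x y _ _ hx hy => rw [map_mul, hx, hy]

theorem mem_span_koszulRelations_sup_of_liftKaehlerDifferential_mem {S : Set 𝔸}
    (hS : ∀ f ∈ S, f ∈ Algebra.adjoin k (Set.range fun i : Fin n => (X (i, 0) : 𝔸)))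
    {I : Ideal 𝔸} (hI : arcGenerators k n S ⊆ I) {η : Ω[𝔸⁄k]}
    (hη : (arcDerivation k n).liftKaehlerDifferential η ∈ Ideal.span (arcGenerators k n S)) :
    η ∈ span 𝔸 (koszulRelations (arcDerivation k n).liftKaehlerDifferential
        fun p => D k 𝔸 (X p)) ⊔ (I • ⊤ ⊔ span 𝔸 (D k 𝔸 '' I)) := by
  set N := span 𝔸 (koszulRelations (arcDerivation k n).liftKaehlerDifferential
    fun p => D k 𝔸 (X p)) ⊔ (I • ⊤ ⊔ span 𝔸 (D k 𝔸 '' I))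
  -- Quantifying over the multiplier `c` makes the claim stable under multiplication by `𝔸`.
  have hgen : ∀ x ∈ Ideal.span (arcGenerators k n S), ∀ c,
      c * x - weightZeroPart k n (c * x) ∈ N.map (arcDerivation k n).liftKaehlerDifferential := by
    intro x hx
    induction hx using span_induction with
    | mem g hg =>
      intro c
      rcases mem_or_exists_eq_arcDerivation_of_mem_arcGenerators hg with hgS | ⟨g, hg', rfl⟩
      · obtain ⟨w, hw⟩ := sub_weightZeroPart_mem_range k n c
        refine ⟨g • w, mem_sup_right (mem_sup_left (smul_mem_smul (hI hg) mem_top)), ?_⟩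
        rw [map_smul, hw, smul_eq_mul, map_mul, weightZeroPart_eq_self_of_mem_adjoin k n (hS g hgS)]
        ring
      · have hε : weightZeroPart k n (arcDerivation k n g) = 0 := by
          rw [← Derivation.liftKaehlerDifferential_comp_D]
          exact weightZeroPart_liftKaehlerDifferential k n _
        refine ⟨c • D k 𝔸 g,
          mem_sup_right (mem_sup_right (smul_mem _ _ (subset_span ⟨g, hI hg', rfl⟩))), ?_⟩
        rw [map_mul, hε, mul_zero, sub_zero, map_smul, Derivation.liftKaehlerDifferential_comp_D,
          smul_eq_mul]
    | zero => simp
    | add x y _ _ hx hy =>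
      intro c
      convert add_mem (hx c) (hy c) using 1
      rw [mul_add, map_add]; ring
    | smul a x _ hx =>
      intro c
      simpa [mul_assoc] using hx (c * a)
  obtain ⟨u, hu, hιu⟩ := by simpa [weightZeroPart_liftKaehlerDifferential] using hgen _ hη 1
  have hker : η - u ∈ N :=
    mem_sup_left (ker_liftKaehlerDifferential_arcDerivation_le k n (by simp [hιu]))
  simpa using add_mem hker hu

end Arc

section Quotient

variable {R A B : Type*} [CommRing R] [CommRing A] [CommRing B] [Algebra R A] [Algebra R B]
  [Algebra A B] [IsScalarTower R A B]

theorem Derivation.liftKaehlerDifferential_map (dA : Derivation R A A) (dB : Derivation R B B)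
    (h : ∀ a, dB (algebraMap A B a) = algebraMap A B (dA a)) (η : Ω[A⁄R]) :
    dB.liftKaehlerDifferential (KaehlerDifferential.map R R A B η) =
      algebraMap A B (dA.liftKaehlerDifferential η) := by
  have hη : η ∈ span A (Set.range (D R A)) := by
    rw [span_range_derivation]; trivial
  induction hη using span_induction with
  | mem _ hx =>
    obtain ⟨a, rfl⟩ := hx
    rw [map_D, Derivation.liftKaehlerDifferential_comp_D,
      Derivation.liftKaehlerDifferential_comp_D, h]
  | zero => simp
  | add x y _ _ hx hy => simp only [map_add, hx, hy]
  | smul a x _ hx =>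
    rw [LinearMap.map_smul, ← algebraMap_smul B a, LinearMap.map_smul, hx, LinearMap.map_smul,
      smul_eq_mul, smul_eq_mul, map_mul]

theorem KaehlerDifferential.map_span_koszulRelations_le (dA : Derivation R A A)
    (dB : Derivation R B B) (h : ∀ a, dB (algebraMap A B a) = algebraMap A B (dA a))
    {ι : Type*} (b : ι → A) :
    (span A (koszulRelations dA.liftKaehlerDifferential fun i => D R A (b i))).map
        (KaehlerDifferential.map R R A B) ≤
      (span B (koszulRelations dB.liftKaehlerDifferential (D R B))).restrictScalars A := by
  refine map_span_le _ _ _ |>.mpr fun _ ⟨p, q, hpq⟩ => ?_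
  refine span_le_restrictScalars A B _
    (subset_span ⟨algebraMap A B (b p), algebraMap A B (b q), ?_⟩)
  simp [hpq, h, ← algebraMap_smul B]

end Quotient

theorem KaehlerDifferential.smul_top_sup_span_D_le_ker_map {R A : Type*} [CommRing R]
    [CommRing A] [Algebra R A] (I : Ideal A) :
    I • ⊤ ⊔ span A (D R A '' I) ≤ LinearMap.ker (KaehlerDifferential.map R R A (A ⧸ I)) := by
  refine sup_le (smul_le.mpr fun a ha η _ => ?_) (span_le.mpr ?_)
  · rw [LinearMap.mem_ker, map_smul, ← algebraMap_smul (A ⧸ I) a,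
      Ideal.Quotient.algebraMap_eq, Ideal.Quotient.eq_zero_iff_mem.mpr ha, zero_smul]
  · rintro _ ⟨a, ha, rfl⟩
    simp [Ideal.Quotient.eq_zero_iff_mem.mpr ha]

theorem arc_koszul_minus_one_vanishes_general (k : Type*) [Field k]
    (n : ℕ)
    (S : Finset (MvPolynomial (Fin n × ℕ) k))
    (hS : ∀ f ∈ S, f ∈ Algebra.adjoin k
      (Set.range fun i : Fin n => (MvPolynomial.X (i, 0) : MvPolynomial (Fin n × ℕ) k)))
    (I : Ideal (MvPolynomial (Fin n × ℕ) k))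
    (hI : I = Ideal.span
      {g | ∃ f ∈ S, ∃ j : ℕ, g = (fun a => arcDerivation k n a)^[j] f}) :
    (∀ a ∈ I, arcDerivation k n a ∈ I) ∧
    ∀ Dbar : Derivation k (MvPolynomial (Fin n × ℕ) k ⧸ I)
        (MvPolynomial (Fin n × ℕ) k ⧸ I),
      (∀ a : MvPolynomial (Fin n × ℕ) k,
          Dbar (Ideal.Quotient.mk I a) = Ideal.Quotient.mk I (arcDerivation k n a)) →
      LinearMap.ker Dbar.liftKaehlerDifferential
        = Submodule.span (MvPolynomial (Fin n × ℕ) k ⧸ I)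
            {ω | ∃ c c' : MvPolynomial (Fin n × ℕ) k ⧸ I,
              ω = Dbar c • KaehlerDifferential.D k (MvPolynomial (Fin n × ℕ) k ⧸ I) c'
                - Dbar c' • KaehlerDifferential.D k (MvPolynomial (Fin n × ℕ) k ⧸ I) c} := by
  obtain rfl : I = Ideal.span (arcGenerators k n S) := hI
  refine ⟨fun a ha => (arcDerivation k n).apply_mem_ideal_span
    (fun g hg => Ideal.subset_span (arcDerivation_mem_arcGenerators hg)) ha, fun Dbar hDbar => ?_⟩
  have hW : {ω | ∃ c c', ω = Dbar c • D k _ c' - Dbar c' • D k _ c} =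
      koszulRelations Dbar.liftKaehlerDifferential (D k _) := by
    simp [koszulRelations]
  rw [hW]
  refine le_antisymm (fun ω hω => ?_) (span_koszulRelations_le_ker _ _)
  obtain ⟨η, rfl⟩ := map_surjective_of_surjective k k _ _ Ideal.Quotient.mk_surjective ω
  have hη : (arcDerivation k n).liftKaehlerDifferential η ∈ Ideal.span (arcGenerators k n S) := by
    rw [← Ideal.Quotient.eq_zero_iff_mem, ← Ideal.Quotient.algebraMap_eq,
      ← Derivation.liftKaehlerDifferential_map (arcDerivation k n) Dbar hDbar]
    exact hω
  obtain ⟨κ, hκ, ζ, hζ, rfl⟩ := mem_sup.mp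
    (mem_span_koszulRelations_sup_of_liftKaehlerDifferential_mem k n hS Ideal.subset_span hη)
  rw [map_add, smul_top_sup_span_D_le_ker_map _ hζ, add_zero]
  exact map_span_koszulRelations_le _ _ hDbar X (mem_map_of_mem hκ)

/-- Theorem `thm:ssjets`, implication (⇐): let `S` be a finite set of polynomials in the
weight-zero variables `x_{i,0}` and `I` the ideal of `A = k[x_{i,j}]` generated by all
iterated derivatives `∂^j(f)`, `f ∈ S` (so `B = A/I` is the arc algebra of
`Spec(k[x_{1,0},…,x_{n,0}]/(S))`).  Then `I` is `∂`-stable, and for the induced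
derivation `∂̄` on `B`, the kernel of the contraction `ι : Ω_{B/k} → B` (the `B`-linear
map with `ι(db) = ∂̄b`) equals the submodule `W` generated by the elements
`(∂̄c)·dc′ − (∂̄c′)·dc`; i.e. the degree `−1` Koszul homology of the arc algebra
vanishes. -/
theorem arc_koszul_minus_one_vanishes (k : Type*) [Field k] [CharZero k]
    (n : ℕ) (hn : 1 ≤ n)
    (S : Finset (MvPolynomial (Fin n × ℕ) k))
    (hS : ∀ f ∈ S, f ∈ Algebra.adjoin k
      (Set.range fun i : Fin n => (MvPolynomial.X (i, 0) : MvPolynomial (Fin n × ℕ) k)))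
    (I : Ideal (MvPolynomial (Fin n × ℕ) k))
    (hI : I = Ideal.span
      {g | ∃ f ∈ S, ∃ j : ℕ, g = (fun a => arcDerivation k n a)^[j] f}) :
    (∀ a ∈ I, arcDerivation k n a ∈ I) ∧
    ∀ Dbar : Derivation k (MvPolynomial (Fin n × ℕ) k ⧸ I)
        (MvPolynomial (Fin n × ℕ) k ⧸ I),
      (∀ a : MvPolynomial (Fin n × ℕ) k,
          Dbar (Ideal.Quotient.mk I a) = Ideal.Quotient.mk I (arcDerivation k n a)) →
      LinearMap.ker Dbar.liftKaehlerDifferential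
        = Submodule.span (MvPolynomial (Fin n × ℕ) k ⧸ I)
            {ω | ∃ c c' : MvPolynomial (Fin n × ℕ) k ⧸ I,
              ω = Dbar c • KaehlerDifferential.D k (MvPolynomial (Fin n × ℕ) k ⧸ I) c'
                - Dbar c' • KaehlerDifferential.D k (MvPolynomial (Fin n × ℕ) k ⧸ I) c} :=
  arc_koszul_minus_one_vanishes_general k n S hS I hI
end
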